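/- Let Λ be a set with a symmetric nonnegative distance function d, let X ⊆ Λ be finite, let r > 0, and let N_r ∈ ℕ be such that for every x ∈ X the set {y ∈ X : d(x,y) ≤ r} has at most N_r elements. Then N(X, 2, r) ≤ |X| · N_r and N(X, 3, r) ≤ 2 · |X| · N_r². -/

import Mathlib

open scoped BigOperators

/-- The distance `d(S,T) = min_{s∈S,t∈T} d(s,t)` between two (nonempty, finite) subsets,
realized as an infimum. -/
noncomputable def setDist {Λ : Type*} (d : Λ → Λ → ℝ) (S T : Finset Λ) : ℝ :=
  sInf {r : ℝ | ∃ s ∈ S, ∃ t ∈ T, r = d s t}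

/-- The spread `Δ(Y) = max_{y∈Y} d(y, Y∖{y})`, realized as a supremum. -/
noncomputable def spread {Λ : Type*} [DecidableEq Λ] (d : Λ → Λ → ℝ) (Y : Finset Λ) : ℝ :=
  sSup {r : ℝ | ∃ y ∈ Y, r = setDist d {y} (Y.erase y)}

/-- The 2-spread `Δ₂(Y) = max_{J ⊆ Y, |J| = 2} d(J, Y∖J)`. -/
noncomputable def spread2 {Λ : Type*} [DecidableEq Λ] (d : Λ → Λ → ℝ) (Y : Finset Λ) : ℝ :=
  sSup {r : ℝ | ∃ J : Finset Λ, J ⊆ Y ∧ J.card = 2 ∧ r = setDist d J (Y \ J)}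

/-- `N(X,n,r)`: the number of `n`-element subsets `Y ⊆ X` with `Δ(Y) ≤ r`. -/
noncomputable def countSpread {Λ : Type*} [DecidableEq Λ] (d : Λ → Λ → ℝ)
    (X : Finset Λ) (n : ℕ) (r : ℝ) : ℕ :=
  {Y : Finset Λ | Y ⊆ X ∧ Y.card = n ∧ spread d Y ≤ r}.ncard

/-- The sequence `q₂ = 1`, `q₃ = 2`, `q_{n+2} = (n+1)·q_{n+1} + q_n` (for `n ≥ 2`). -/
def qseq : ℕ → ℕ
  | 0 => 0
  | 1 => 0
  | 2 => 1
  | 3 => 2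
  | (n + 4) => (n + 3) * qseq (n + 3) + qseq (n + 2)

/-!
An `n`-set of spread at most `r` with `n ∈ {2, 3}` has a centre: a point within distance `r`
of every other point. For `n = 2` this is immediate; for `n = 3` every point has a neighbour
within `r`, so the symmetric "within `r`" graph on the three points has at least two edges,
and two edges of a triangle share a vertex. Recording `Y` as its centre `y ∈ X` together with
the `(n - 1)`-subset `Y.erase y` of the `r`-ball around `y` gives
`N(X, n, r) ≤ |X| · C(N_r, n - 1)`.
-/

section Spread

variable {Λ : Type*} (d : Λ → Λ → ℝ)

lemma exists_le_of_setDist_le {S T : Finset Λ} (hS : S.Nonempty) (hT : T.Nonempty) {r : ℝ}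
    (h : setDist d S T ≤ r) : ∃ s ∈ S, ∃ t ∈ T, d s t ≤ r := by
  have hset : {x : ℝ | ∃ s ∈ S, ∃ t ∈ T, x = d s t}
      = (fun p : Λ × Λ => d p.1 p.2) '' ↑(S ×ˢ T) := by
    ext x; simp [eq_comm]
  rw [setDist, hset] at h
  obtain ⟨⟨s, t⟩, hst, hx⟩ :=
    ((Finset.coe_nonempty.mpr (hS.product hT)).image (fun p : Λ × Λ => d p.1 p.2)).csInf_mem
      ((S ×ˢ T).finite_toSet.image _)
  rw [Finset.mem_coe, Finset.mem_product] at hst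
  exact ⟨s, hst.1, t, hst.2, hx.le.trans h⟩

variable [DecidableEq Λ]

lemma setDist_le_spread {Y : Finset Λ} {y : Λ} (hy : y ∈ Y) :
    setDist d {y} (Y.erase y) ≤ spread d Y := by
  have hset : {x : ℝ | ∃ y ∈ Y, x = setDist d {y} (Y.erase y)}
      = (fun y => setDist d {y} (Y.erase y)) '' ↑Y := by
    ext x; simp [eq_comm]
  refine le_csSup ?_ ⟨y, hy, rfl⟩
  rw [hset]
  exact (Y.finite_toSet.image _).bddAbove

lemma exists_ne_le_of_spread_le {Y : Finset Λ} (hY : 2 ≤ Y.card) {r : ℝ}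
    (h : spread d Y ≤ r) {y : Λ} (hy : y ∈ Y) : ∃ z ∈ Y, z ≠ y ∧ d y z ≤ r := by
  have hne : (Y.erase y).Nonempty := by
    rw [← Finset.card_pos, Finset.card_erase_of_mem hy]; omega
  obtain ⟨_, hy', z, hz, hdz⟩ :=
    exists_le_of_setDist_le d (Finset.singleton_nonempty y) hne ((setDist_le_spread d hy).trans h)
  rw [Finset.mem_singleton] at hy'
  subst hy'
  exact ⟨z, Finset.mem_of_mem_erase hz, Finset.ne_of_mem_erase hz, hdz⟩

lemma exists_center_of_card_eq_two {Y : Finset Λ} (hY : Y.card = 2) {r : ℝ}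
    (h : spread d Y ≤ r) : ∃ y ∈ Y, ∀ x ∈ Y.erase y, d y x ≤ r := by
  obtain ⟨a, b, -, rfl⟩ := Finset.card_eq_two.mp hY
  obtain ⟨z, hz, hza, hdz⟩ := exists_ne_le_of_spread_le d hY.ge h (Finset.mem_insert_self a {b})
  refine ⟨a, Finset.mem_insert_self a {b}, ?_⟩
  simp only [Finset.mem_erase, Finset.mem_insert, Finset.mem_singleton] at hz ⊢
  rintro x ⟨hxa, rfl | rfl⟩
  · exact absurd rfl hxa
  · rcases hz with rfl | rfl
    exacts [absurd rfl hza, hdz]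

variable {d}

lemma exists_center_of_triple (hsym : ∀ x y, d x y = d y x) {a b c : Λ} {r : ℝ}
    (hab : d a b ≤ r) (hc : d c a ≤ r ∨ d c b ≤ r) :
    ∃ y ∈ ({a, b, c} : Finset Λ), ∀ x ∈ ({a, b, c} : Finset Λ).erase y, d y x ≤ r := by
  simp only [Finset.mem_insert, Finset.mem_singleton, Finset.mem_erase]
  rcases hc with hca | hcb
  · refine ⟨a, .inl rfl, ?_⟩
    rintro x ⟨hxa, rfl | rfl | rfl⟩
    exacts [absurd rfl hxa, hab, hsym a x ▸ hca]
  · refine ⟨b, .inr (.inl rfl), ?_⟩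
    rintro x ⟨hxb, rfl | rfl | rfl⟩
    exacts [hsym b x ▸ hab, absurd rfl hxb, hsym b x ▸ hcb]

lemma exists_center_of_card_eq_three (hsym : ∀ x y, d x y = d y x) {Y : Finset Λ}
    (hY : Y.card = 3) {r : ℝ} (h : spread d Y ≤ r) :
    ∃ y ∈ Y, ∀ x ∈ Y.erase y, d y x ≤ r := by
  obtain ⟨a, b, c, -, -, -, rfl⟩ := Finset.card_eq_three.mp hY
  have nbr : ∀ w ∈ ({a, b, c} : Finset Λ), ∃ z ∈ ({a, b, c} : Finset Λ), z ≠ w ∧ d w z ≤ r :=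
    fun w hw => exists_ne_le_of_spread_le d (by omega) h hw
  obtain ⟨z, hz, hza, hdz⟩ := nbr a (by simp)
  simp only [Finset.mem_insert, Finset.mem_singleton] at hz
  rcases hz with rfl | rfl | rfl
  · exact absurd rfl hza
  · obtain ⟨w, hw, hwc, hdw⟩ := nbr c (by simp)
    simp only [Finset.mem_insert, Finset.mem_singleton] at hw
    rcases hw with rfl | rfl | rfl
    · exact exists_center_of_triple hsym hdz (.inl hdw)
    · exact exists_center_of_triple hsym hdz (.inr hdw)
    · exact absurd rfl hwc
  · obtain ⟨w, hw, hwb, hdw⟩ := nbr b (by simp)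
    simp only [Finset.mem_insert, Finset.mem_singleton] at hw
    rcases hw with rfl | rfl | rfl
    · rw [Finset.pair_comm]; exact exists_center_of_triple hsym hdz (.inl hdw)
    · exact absurd rfl hwb
    · rw [Finset.pair_comm]; exact exists_center_of_triple hsym hdz (.inr hdw)

end Spread

lemma ncard_le_sum_choose_of_exists_center {α : Type*} [DecidableEq α] (X : Finset α)
    (B : α → Finset α) (k : ℕ) (S : Set (Finset α))
    (hS : ∀ Y ∈ S, ∃ y ∈ X, y ∈ Y ∧ Y.erase y ⊆ B y ∧ (Y.erase y).card = k) :
    S.ncard ≤ ∑ y ∈ X, (B y).card.choose k := by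
  let T := X.biUnion fun y => ((B y).powersetCard k).image (insert y)
  have hST : S ⊆ ↑T := by
    intro Y hY
    obtain ⟨y, hyX, hyY, hsub, hcard⟩ := hS Y hY
    simp only [T, Finset.coe_biUnion, Set.mem_iUnion, Finset.mem_coe, Finset.mem_image,
      Finset.mem_powersetCard]
    exact ⟨y, hyX, Y.erase y, ⟨hsub, hcard⟩, Finset.insert_erase hyY⟩
  calc S.ncard ≤ T.card := by simpa using Set.ncard_le_ncard hST
    _ ≤ ∑ y ∈ X, (((B y).powersetCard k).image (insert y)).card := Finset.card_biUnion_le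
    _ ≤ ∑ y ∈ X, (B y).card.choose k := Finset.sum_le_sum fun y _ =>
        Finset.card_image_le.trans (Finset.card_powersetCard k (B y)).le

lemma countSpread_le_of_exists_center {Λ : Type*} [DecidableEq Λ] {d : Λ → Λ → ℝ}
    {X : Finset Λ} {r : ℝ} {Nr : ℕ} (hN : ∀ x ∈ X, (X.filter (d x · ≤ r)).card ≤ Nr) {n : ℕ}
    (hcenter : ∀ Y : Finset Λ, Y.card = n → spread d Y ≤ r →
      ∃ y ∈ Y, ∀ x ∈ Y.erase y, d y x ≤ r) :
    countSpread d X n r ≤ X.card * Nr.choose (n - 1) := by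
  calc countSpread d X n r ≤ ∑ y ∈ X, (X.filter (d y · ≤ r)).card.choose (n - 1) := by
        refine ncard_le_sum_choose_of_exists_center X _ _ _ ?_
        rintro Y ⟨hYX, hYn, hYr⟩
        obtain ⟨y, hy, hball⟩ := hcenter Y hYn hYr
        refine ⟨y, hYX hy, hy, fun x hx => ?_, by rw [Finset.card_erase_of_mem hy, hYn]⟩
        exact Finset.mem_filter.mpr ⟨hYX (Finset.mem_of_mem_erase hx), hball x hx⟩
    _ ≤ ∑ _y ∈ X, Nr.choose (n - 1) :=
        Finset.sum_le_sum fun y hy => Nat.choose_le_choose _ (hN y hy)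
    _ = X.card * Nr.choose (n - 1) := by rw [Finset.sum_const, smul_eq_mul]

theorem stmt6_general {Λ : Type*} [DecidableEq Λ] (d : Λ → Λ → ℝ)
    (hsym : ∀ x y, d x y = d y x)
    (X : Finset Λ) (r : ℝ) (Nr : ℕ)
    (hN : ∀ x ∈ X, ({y | y ∈ X ∧ d x y ≤ r} : Set Λ).ncard ≤ Nr) :
    countSpread d X 2 r ≤ X.card * Nr ∧ countSpread d X 3 r ≤ 2 * X.card * Nr ^ 2 := by
  have hball : ∀ x ∈ X, (X.filter (d x · ≤ r)).card ≤ Nr := fun x hx => by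
    simpa [← Set.ncard_coe_finset, Finset.coe_filter] using hN x hx
  refine ⟨?_, ?_⟩
  · simpa using countSpread_le_of_exists_center (n := 2) hball
      fun Y hY => exists_center_of_card_eq_two d hY
  · calc countSpread d X 3 r ≤ X.card * Nr.choose 2 :=
          countSpread_le_of_exists_center hball
            fun Y hY => exists_center_of_card_eq_three hsym hY
      _ ≤ X.card * Nr ^ 2 := Nat.mul_le_mul_left _ (Nat.choose_le_pow Nr 2)
      _ ≤ 2 * X.card * Nr ^ 2 := by nlinarith

theorem stmt6 {Λ : Type*} [DecidableEq Λ] (d : Λ → Λ → ℝ)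
    (hsym : ∀ x y, d x y = d y x) (hnonneg : ∀ x y, 0 ≤ d x y)
    (X : Finset Λ) (r : ℝ) (hr : 0 < r) (Nr : ℕ)
    (hN : ∀ x ∈ X, ({y | y ∈ X ∧ d x y ≤ r} : Set Λ).ncard ≤ Nr) :
    countSpread d X 2 r ≤ X.card * Nr ∧ countSpread d X 3 r ≤ 2 * X.card * Nr ^ 2 :=
  stmt6_general d hsym X r Nr hN
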